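/- Let d ≥ 1, σ₁ ∈ ℝ, let I ⊆ ℝ be an open interval, and let u : I × ℝ^d → ℂ be smooth with u(t,·) compactly supported in a fixed compact set for all t ∈ I, and let W : I × ℝ^d → ℝ be real-valued with i·∂_t u + Δ²u - σ₁·Δu + W·u = 0 pointwise. Then the mass t ↦ ∫_{ℝ^d} |u(t,x)|² dx is constant on I. -/

import Mathlib

open MeasureTheory Complex

noncomputable section

/-- Spatial Laplacian of a complex-valued function on `ℝ^d`:
the trace of the second Fréchet derivative. -/
def lapC {d : ℕ} (f : EuclideanSpace ℝ (Fin d) → ℂ)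
    (x : EuclideanSpace ℝ (Fin d)) : ℂ :=
  ∑ i : Fin d, iteratedFDeriv ℝ 2 f x
    ![EuclideanSpace.single i 1, EuclideanSpace.single i 1]

namespace MassConsAux

variable {d : ℕ}

local notation "E" => EuclideanSpace ℝ (Fin d)

/-- smoothness of a directional derivative -/
lemma smoothD {g : E → ℂ} (hg : ContDiff ℝ (⊤ : ℕ∞) g) (v : E) :
    ContDiff ℝ (⊤ : ℕ∞) (fun x => fderiv ℝ g x v) :=
  (hg.fderiv_right (m := (⊤ : ℕ∞)) (by simp)).clm_apply contDiff_const

lemma cptD {g : E → ℂ} (hg : HasCompactSupport g) (v : E) :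
    HasCompactSupport (fun x => fderiv ℝ g x v) :=
  hg.fderiv_apply ℝ v

lemma contD {g : E → ℂ} (hg : ContDiff ℝ (⊤ : ℕ∞) g) (v : E) :
    Continuous (fun x => fderiv ℝ g x v) :=
  (smoothD hg v).continuous

/-- rewriting `lapC` via iterated directional derivatives -/
lemma lapC_eq {g : E → ℂ} (hg : ContDiff ℝ (⊤ : ℕ∞) g) (x : E) :
    lapC g x = ∑ i : Fin d,
      fderiv ℝ (fun y => fderiv ℝ g y (EuclideanSpace.single i 1)) x
        (EuclideanSpace.single i 1) := by
  unfold lapC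
  refine Finset.sum_congr rfl fun i _ => ?_
  rw [iteratedFDeriv_two_apply]
  have hdiff : DifferentiableAt ℝ (fderiv ℝ g) x :=
    ((hg.fderiv_right (m := (⊤ : ℕ∞)) (by simp)).differentiable (by simp)) x
  rw [fderiv_clm_apply hdiff (differentiableAt_const _)]
  simp

lemma lapC_smooth {g : E → ℂ} (hg : ContDiff ℝ (⊤ : ℕ∞) g) :
    ContDiff ℝ (⊤ : ℕ∞) (lapC g) := by
  have : lapC g = fun x => ∑ i : Fin d,
      fderiv ℝ (fun y => fderiv ℝ g y (EuclideanSpace.single i 1)) x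
        (EuclideanSpace.single i 1) := funext fun x => lapC_eq hg x
  rw [this]
  exact ContDiff.sum fun i _ => smoothD (smoothD hg _) _

lemma lapC_cpt {g : E → ℂ} (hg : HasCompactSupport g) :
    HasCompactSupport (lapC g) := by
  refine hg.mono' ?_
  intro x hx
  rcases Finset.exists_ne_zero_of_sum_ne_zero hx with ⟨i, -, hi⟩
  have h1 : iteratedFDeriv ℝ 2 g x ≠ 0 := fun h => hi (by simp [h])
  exact support_iteratedFDeriv_subset 2 (Function.mem_support.2 h1)

/-- basic integration by parts -/
lemma ibp {f g : E → ℂ} (hf : ContDiff ℝ (⊤ : ℕ∞) f) (hg : ContDiff ℝ (⊤ : ℕ∞) g)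
    (hcf : HasCompactSupport f) (v : E) :
    ∫ x, f x * fderiv ℝ g x v = -∫ x, fderiv ℝ f x v * g x := by
  refine integral_mul_fderiv_eq_neg_fderiv_mul_of_integrable ?_ ?_ ?_
    (fun x _ => hf.differentiable (by simp) x) (fun x _ => hg.differentiable (by simp) x)
  · exact (((contD hf v).mul hg.continuous).integrable_of_hasCompactSupport
      ((cptD hcf v).mul_right))
  · exact ((hf.continuous.mul (contD hg v)).integrable_of_hasCompactSupport
      hcf.mul_right)
  · exact ((hf.continuous.mul hg.continuous).integrable_of_hasCompactSupport
      hcf.mul_right)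

lemma conj_smooth {f : E → ℂ} (hf : ContDiff ℝ (⊤ : ℕ∞) f) :
    ContDiff ℝ (⊤ : ℕ∞) (fun x => (starRingEnd ℂ) (f x)) :=
  Complex.conjCLE.toContinuousLinearMap.contDiff.comp hf

lemma conj_cpt {f : E → ℂ} (hf : HasCompactSupport f) :
    HasCompactSupport (fun x => (starRingEnd ℂ) (f x)) :=
  hf.comp_left (g := (starRingEnd ℂ)) (map_zero _)

lemma fderiv_conj (f : E → ℂ) (x v : E) :
    fderiv ℝ (fun y => (starRingEnd ℂ) (f y)) x v = (starRingEnd ℂ) (fderiv ℝ f x v) := by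
  have : (fun y => (starRingEnd ℂ) (f y)) = (fun y => star (f y)) := rfl
  rw [this, fderiv_star]
  rfl

/-- double integration by parts -/
lemma ibp2 {f g : E → ℂ} (hf : ContDiff ℝ (⊤ : ℕ∞) f) (hg : ContDiff ℝ (⊤ : ℕ∞) g)
    (hcf : HasCompactSupport f) (v : E) :
    ∫ x, (starRingEnd ℂ) (f x) * fderiv ℝ (fun y => fderiv ℝ g y v) x v
      = ∫ x, (starRingEnd ℂ) (fderiv ℝ (fun y => fderiv ℝ f y v) x v) * g x := by
  have step1 := ibp (conj_smooth hf) (smoothD hg v) (conj_cpt hcf) v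
  have step2 := ibp (conj_smooth (smoothD hf v)) hg (conj_cpt (cptD hcf v)) v
  simp only [fderiv_conj] at step1 step2
  rw [step1, step2, neg_neg]

/-- `∫ conj f · Δg = ∫ conj(Δf) · g` -/
lemma green {f g : E → ℂ} (hf : ContDiff ℝ (⊤ : ℕ∞) f) (hg : ContDiff ℝ (⊤ : ℕ∞) g)
    (hcf : HasCompactSupport f) :
    ∫ x, (starRingEnd ℂ) (f x) * lapC g x
      = ∫ x, (starRingEnd ℂ) (lapC f x) * g x := by
  have hint : ∀ i : Fin d, Integrable (fun x =>
      (starRingEnd ℂ) (f x) * fderiv ℝ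
        (fun y => fderiv ℝ g y (EuclideanSpace.single i 1)) x (EuclideanSpace.single i 1)) := by
    intro i
    exact (((conj_smooth hf).continuous.mul
      (contD (smoothD hg _) _)).integrable_of_hasCompactSupport (conj_cpt hcf).mul_right)
  have hint2 : ∀ i : Fin d, Integrable (fun x =>
      (starRingEnd ℂ) (fderiv ℝ
        (fun y => fderiv ℝ f y (EuclideanSpace.single i 1)) x (EuclideanSpace.single i 1)) * g x) := by
    intro i
    exact (((conj_smooth (smoothD (smoothD hf _) _)).continuous.mul
      hg.continuous).integrable_of_hasCompactSupport
      (conj_cpt (cptD (cptD hcf _) _)).mul_right)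
  calc ∫ x, (starRingEnd ℂ) (f x) * lapC g x
      = ∫ x, ∑ i : Fin d, (starRingEnd ℂ) (f x) * fderiv ℝ
        (fun y => fderiv ℝ g y (EuclideanSpace.single i 1)) x (EuclideanSpace.single i 1) := by
        refine integral_congr_ae (Filter.Eventually.of_forall fun x => ?_)
        simp only [lapC_eq hg x, Finset.mul_sum]
    _ = ∑ i : Fin d, ∫ x, (starRingEnd ℂ) (f x) * fderiv ℝ
        (fun y => fderiv ℝ g y (EuclideanSpace.single i 1)) x (EuclideanSpace.single i 1) :=
        integral_finset_sum _ fun i _ => hint i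
    _ = ∑ i : Fin d, ∫ x, (starRingEnd ℂ) (fderiv ℝ
        (fun y => fderiv ℝ f y (EuclideanSpace.single i 1)) x (EuclideanSpace.single i 1)) * g x :=
        Finset.sum_congr rfl fun i _ => ibp2 hf hg hcf _
    _ = ∫ x, ∑ i : Fin d, (starRingEnd ℂ) (fderiv ℝ
        (fun y => fderiv ℝ f y (EuclideanSpace.single i 1)) x (EuclideanSpace.single i 1)) * g x :=
        (integral_finset_sum _ fun i _ => hint2 i).symm
    _ = ∫ x, (starRingEnd ℂ) (lapC f x) * g x := by
        refine integral_congr_ae (Filter.Eventually.of_forall fun x => ?_)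
        simp only [lapC_eq hf x, map_sum, Finset.sum_mul]

lemma integrable_conj_mul {f g : E → ℂ} (hf : ContDiff ℝ (⊤ : ℕ∞) f)
    (hg : ContDiff ℝ (⊤ : ℕ∞) g) (hcf : HasCompactSupport f) :
    Integrable (fun x => (starRingEnd ℂ) (f x) * g x) :=
  ((conj_smooth hf).continuous.mul hg.continuous).integrable_of_hasCompactSupport
    (conj_cpt hcf).mul_right

/-- imaginary part of `∫ conj f · Δf` vanishes -/
lemma im_lap {f : E → ℂ} (hf : ContDiff ℝ (⊤ : ℕ∞) f) (hcf : HasCompactSupport f) :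
    (∫ x, (starRingEnd ℂ) (f x) * lapC f x).im = 0 := by
  have h1 : (starRingEnd ℂ) (∫ x, (starRingEnd ℂ) (f x) * lapC f x)
      = ∫ x, (starRingEnd ℂ) (f x) * lapC f x := by
    rw [← integral_conj]
    calc ∫ x, (starRingEnd ℂ) ((starRingEnd ℂ) (f x) * lapC f x)
        = ∫ x, (starRingEnd ℂ) (lapC f x) * f x := by
          refine integral_congr_ae (Filter.Eventually.of_forall fun x => ?_)
          simp only [map_mul, Complex.conj_conj]
          ring
      _ = ∫ x, (starRingEnd ℂ) (f x) * lapC f x :=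
          (green hf hf hcf).symm
  exact Complex.conj_eq_iff_im.mp h1

/-- imaginary part of `∫ conj f · Δ²f` vanishes -/
lemma im_bilap {f : E → ℂ} (hf : ContDiff ℝ (⊤ : ℕ∞) f) (hcf : HasCompactSupport f) :
    (∫ x, (starRingEnd ℂ) (f x) * lapC (lapC f) x).im = 0 := by
  have h1 : ∫ x, (starRingEnd ℂ) (f x) * lapC (lapC f) x
      = ∫ x, (starRingEnd ℂ) (lapC f x) * lapC f x :=
    green hf (lapC_smooth hf) hcf
  have hintg : Integrable (fun x => (starRingEnd ℂ) (lapC f x) * lapC f x) :=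
    integrable_conj_mul (lapC_smooth hf) (lapC_smooth hf) (lapC_cpt hcf)
  have h2 : ∀ x : E, ((starRingEnd ℂ) (lapC f x) * lapC f x).im = 0 := by
    intro x
    simp [Complex.mul_im]
    ring
  have h3 : (∫ x, (starRingEnd ℂ) (lapC f x) * lapC f x).im
      = ∫ x, ((starRingEnd ℂ) (lapC f x) * lapC f x).im := (integral_im hintg).symm
  rw [h1, h3]
  simp [h2]

end MassConsAux

open MassConsAux in
/-- **Mass conservation** (eq. 2.7 of Proposition 2.4 of the paper). If `u` is a smooth
solution of the fourth-order Schrödinger equation `i∂_t u + Δ²u - σ₁Δu + W·u = 0` on an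
open interval `I = (t₁,t₂)` with `W` real-valued and `u(t,·)` supported in a fixed
compact set for all `t`, then the mass `t ↦ ∫ |u(t,x)|² dx` is constant on `I`. -/
theorem mass_conservation (d : ℕ) (hd : 1 ≤ d) (σ₁ : ℝ) (t₁ t₂ : ℝ)
    (u : ℝ → EuclideanSpace ℝ (Fin d) → ℂ)
    (W : ℝ → EuclideanSpace ℝ (Fin d) → ℝ)
    (K : Set (EuclideanSpace ℝ (Fin d))) (hK : IsCompact K)
    (hsupp : ∀ t, Function.support (u t) ⊆ K)
    (hu : ContDiffOn ℝ (⊤ : ℕ∞)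
      (fun p : ℝ × EuclideanSpace ℝ (Fin d) => u p.1 p.2)
      (Set.Ioo t₁ t₂ ×ˢ Set.univ))
    (hpde : ∀ t ∈ Set.Ioo t₁ t₂, ∀ x,
      Complex.I * deriv (fun s => u s x) t + lapC (lapC (u t)) x
        - (σ₁ : ℂ) * lapC (u t) x + (W t x : ℂ) * u t x = 0) :
    ∀ s ∈ Set.Ioo t₁ t₂, ∀ t ∈ Set.Ioo t₁ t₂,
      ∫ x, Complex.normSq (u s x) = ∫ x, Complex.normSq (u t x) := by
  have hΩ : IsOpen (Set.Ioo t₁ t₂ ×ˢ (Set.univ : Set (EuclideanSpace ℝ (Fin d)))) :=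
    isOpen_Ioo.prod isOpen_univ
  -- slice smoothness
  have slice_smooth : ∀ t ∈ Set.Ioo t₁ t₂, ContDiff ℝ (⊤ : ℕ∞) (u t) := by
    intro t ht
    rw [contDiff_iff_contDiffAt]
    intro x
    have h1 : ContDiffAt ℝ (⊤ : ℕ∞) (fun p : ℝ × EuclideanSpace ℝ (Fin d) => u p.1 p.2) (t, x) :=
      hu.contDiffAt (hΩ.mem_nhds ⟨ht, trivial⟩)
    exact h1.comp x (contDiffAt_const.prodMk contDiffAt_id)
  have slice_cpt : ∀ t, HasCompactSupport (u t) := fun t =>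
    HasCompactSupport.intro hK fun x hx =>
      Function.notMem_support.mp fun h => hx (hsupp t h)
  -- time derivative of slices
  have ut_deriv : ∀ t ∈ Set.Ioo t₁ t₂, ∀ x : EuclideanSpace ℝ (Fin d),
      HasDerivAt (fun s => u s x)
        (fderiv ℝ (fun p : ℝ × EuclideanSpace ℝ (Fin d) => u p.1 p.2) (t, x) (1, 0)) t := by
    intro t ht x
    have hdiff : DifferentiableAt ℝ (fun p : ℝ × EuclideanSpace ℝ (Fin d) => u p.1 p.2) (t, x) :=
      (hu.contDiffAt (hΩ.mem_nhds ⟨ht, trivial⟩)).differentiableAt (by simp)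
    have h2 : HasDerivAt (fun s : ℝ => ((s, x) : ℝ × EuclideanSpace ℝ (Fin d))) (1, 0) t :=
      (hasDerivAt_id t).prodMk (hasDerivAt_const t x)
    exact hdiff.hasFDerivAt.comp_hasDerivAt t h2
  have cfd : ContinuousOn (fderiv ℝ (fun p : ℝ × EuclideanSpace ℝ (Fin d) => u p.1 p.2))
      (Set.Ioo t₁ t₂ ×ˢ Set.univ) :=
    hu.continuousOn_fderiv_of_isOpen hΩ (by simp)
  -- the mass has derivative zero everywhere on the interval
  have mass_deriv : ∀ t₀ ∈ Set.Ioo t₁ t₂,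
      HasDerivAt (fun s => ∫ x, Complex.normSq (u s x)) 0 t₀ := by
    intro t₀ ht₀
    obtain ⟨δ, δpos, hball⟩ := Metric.isOpen_iff.1 isOpen_Ioo t₀ ht₀
    set F' : ℝ → EuclideanSpace ℝ (Fin d) → ℝ := fun s x =>
      2 * ((starRingEnd ℂ) (u s x) *
        fderiv ℝ (fun p : ℝ × EuclideanSpace ℝ (Fin d) => u p.1 p.2) (s, x) (1, 0)).re
      with hF'def
    -- a uniform bound on F' over the closed ball times K
    have hScomp : IsCompact (Metric.closedBall t₀ (δ/2) ×ˢ K) :=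
      (isCompact_closedBall _ _).prod hK
    have hSΩ : Metric.closedBall t₀ (δ/2) ×ˢ K ⊆ Set.Ioo t₁ t₂ ×ˢ Set.univ := by
      rintro ⟨s, x⟩ ⟨hs, hx⟩
      exact ⟨hball (Metric.closedBall_subset_ball (by linarith) hs), trivial⟩
    have hGcont : ContinuousOn
        (fun p : ℝ × EuclideanSpace ℝ (Fin d) => 2 * ‖u p.1 p.2‖ *
          ‖fderiv ℝ (fun p : ℝ × EuclideanSpace ℝ (Fin d) => u p.1 p.2) p (1, 0)‖)
        (Set.Ioo t₁ t₂ ×ˢ Set.univ) :=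
      (continuousOn_const.mul hu.continuousOn.norm).mul
        ((cfd.clm_apply continuousOn_const).norm)
    obtain ⟨M, hM⟩ := hScomp.exists_bound_of_continuousOn (hGcont.mono hSΩ)
    -- apply differentiation under the integral sign
    have key := hasDerivAt_integral_of_dominated_loc_of_deriv_le
      (F := fun s x => Complex.normSq (u s x)) (F' := F')
      (x₀ := t₀) (s := Metric.ball t₀ (δ/2)) (bound := K.indicator fun _ => M) (μ := volume)
      (Metric.ball_mem_nhds _ (by positivity))
      ?meas ?int ?meas' ?bound ?bint ?diff
    case meas =>
      filter_upwards [isOpen_Ioo.mem_nhds ht₀] with s hs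
      exact (Complex.continuous_normSq.comp (slice_smooth s hs).continuous).aestronglyMeasurable
    case int =>
      exact (Complex.continuous_normSq.comp
        (slice_smooth t₀ ht₀).continuous).integrable_of_hasCompactSupport
        ((slice_cpt t₀).comp_left (g := Complex.normSq) (map_zero _))
    case meas' =>
      have h1 : Continuous fun x : EuclideanSpace ℝ (Fin d) =>
          ((t₀, x) : ℝ × EuclideanSpace ℝ (Fin d)) :=
        (continuous_const.prodMk continuous_id)
      have h2 : Continuous fun x : EuclideanSpace ℝ (Fin d) =>
          fderiv ℝ (fun p : ℝ × EuclideanSpace ℝ (Fin d) => u p.1 p.2) (t₀, x) :=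
        cfd.comp_continuous h1 fun x => ⟨ht₀, trivial⟩
      have h3 : Continuous (F' t₀) := by
        rw [hF'def]
        exact continuous_const.mul
          (Complex.continuous_re.comp
            ((Complex.continuous_conj.comp (slice_smooth t₀ ht₀).continuous).mul
              (h2.clm_apply continuous_const)))
      exact h3.aestronglyMeasurable
    case bound =>
      refine Filter.Eventually.of_forall fun x => fun s hs => ?_
      by_cases hx : x ∈ K
      · have hmem : ((s, x) : ℝ × EuclideanSpace ℝ (Fin d)) ∈
            Metric.closedBall t₀ (δ/2) ×ˢ K :=
          ⟨Metric.ball_subset_closedBall hs, hx⟩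
        have hb := hM _ hmem
        rw [Set.indicator_of_mem hx]
        set z := (starRingEnd ℂ) (u s x) *
          fderiv ℝ (fun p : ℝ × EuclideanSpace ℝ (Fin d) => u p.1 p.2) (s, x) (1, 0) with hzdef
        calc ‖F' s x‖ = |2 * z.re| := rfl
          _ ≤ 2 * ‖z‖ := by
              rw [abs_mul]
              gcongr
              · simp
              · exact Complex.abs_re_le_norm z
          _ = 2 * ‖u s x‖ *
              ‖fderiv ℝ (fun p : ℝ × EuclideanSpace ℝ (Fin d) => u p.1 p.2) (s, x) (1, 0)‖ := by
              rw [hzdef, norm_mul, RCLike.norm_conj]; ring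
          _ ≤ M := le_trans (le_abs_self _) hb
      · have hzero : ∀ r : ℝ, u r x = 0 := fun r =>
          Function.notMem_support.mp fun h => hx (hsupp r h)
        rw [Set.indicator_of_notMem hx]
        simp [hF'def, hzero s]
    case bint =>
      rw [integrable_indicator_iff hK.measurableSet]
      exact integrableOn_const hK.measure_lt_top.ne
    case diff =>
      refine Filter.Eventually.of_forall fun x => fun s hs => ?_
      have hsIoo : s ∈ Set.Ioo t₁ t₂ :=
        hball (Metric.ball_subset_ball (by linarith) hs)
      have hc := ut_deriv s hsIoo x
      set w := fderiv ℝ (fun p : ℝ × EuclideanSpace ℝ (Fin d) => u p.1 p.2) (s, x) (1, 0)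
        with hwdef
      have hre : HasDerivAt (fun r => (u r x).re) w.re s :=
        (Complex.reCLM.hasFDerivAt.comp_hasDerivAt s hc)
      have him : HasDerivAt (fun r => (u r x).im) w.im s :=
        (Complex.imCLM.hasFDerivAt.comp_hasDerivAt s hc)
      have h3 : HasDerivAt (fun r => (u r x).re * (u r x).re + (u r x).im * (u r x).im)
          ((w.re * (u s x).re + (u s x).re * w.re) + (w.im * (u s x).im + (u s x).im * w.im)) s :=
        (hre.mul hre).add (him.mul him)
      have heq : (fun r => Complex.normSq (u r x))
          = fun r => (u r x).re * (u r x).re + (u r x).im * (u r x).im := by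
        funext r; rw [Complex.normSq_apply]
      rw [heq]
      refine h3.congr_deriv ?_
      simp only [hF'def, Complex.mul_re, Complex.conj_re, Complex.conj_im]
      ring
    -- now identify the derivative with zero
    have hderiv := key.2
    have hzero : ∫ x, F' t₀ x = 0 := by
      have hfs : ContDiff ℝ (⊤ : ℕ∞) (u t₀) := slice_smooth t₀ ht₀
      have hfc : HasCompactSupport (u t₀) := slice_cpt t₀
      -- rewrite F' t₀ using the PDE
      have hpt : ∀ x : EuclideanSpace ℝ (Fin d), F' t₀ x =
          -2 * ((starRingEnd ℂ) (u t₀ x) * lapC (lapC (u t₀)) x).im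
          + 2 * σ₁ * ((starRingEnd ℂ) (u t₀ x) * lapC (u t₀) x).im := by
        intro x
        have hD : deriv (fun s => u s x) t₀
            = fderiv ℝ (fun p : ℝ × EuclideanSpace ℝ (Fin d) => u p.1 p.2) (t₀, x) (1, 0) :=
          (ut_deriv t₀ ht₀ x).deriv
        have hp := hpde t₀ ht₀ x
        rw [hD] at hp
        set w := fderiv ℝ (fun p : ℝ × EuclideanSpace ℝ (Fin d) => u p.1 p.2) (t₀, x) (1, 0)
          with hwdef
        set P := lapC (lapC (u t₀)) x - (σ₁ : ℂ) * lapC (u t₀) x + (W t₀ x : ℂ) * u t₀ x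
          with hPdef
        have hI : Complex.I * w = -P := by
          rw [hPdef]; linear_combination hp
        have hw : w = Complex.I * P := by
          calc w = -(Complex.I * (Complex.I * w)) := by
                rw [← mul_assoc, Complex.I_mul_I]; ring
            _ = -(Complex.I * (-P)) := by rw [hI]
            _ = Complex.I * P := by ring
        have hmul : (starRingEnd ℂ) (u t₀ x) * w
            = Complex.I * ((starRingEnd ℂ) (u t₀ x) * P) := by
          rw [hw]; ring
        have him : ((starRingEnd ℂ) (u t₀ x) * P).im
            = ((starRingEnd ℂ) (u t₀ x) * lapC (lapC (u t₀)) x).im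
              - σ₁ * ((starRingEnd ℂ) (u t₀ x) * lapC (u t₀) x).im := by
          have hWterm : ((starRingEnd ℂ) (u t₀ x) * ((W t₀ x : ℂ) * u t₀ x)).im = 0 := by
            have h5 : (starRingEnd ℂ) (u t₀ x) * ((W t₀ x : ℂ) * u t₀ x)
                = (W t₀ x : ℂ) * ((Complex.normSq (u t₀ x) : ℝ) : ℂ) := by
              rw [Complex.normSq_eq_conj_mul_self]; ring
            rw [h5, ← Complex.ofReal_mul]
            exact Complex.ofReal_im _
          have hsig : ((starRingEnd ℂ) (u t₀ x) * ((σ₁ : ℂ) * lapC (u t₀) x)).im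
              = σ₁ * ((starRingEnd ℂ) (u t₀ x) * lapC (u t₀) x).im := by
            rw [show (starRingEnd ℂ) (u t₀ x) * ((σ₁ : ℂ) * lapC (u t₀) x)
                = (σ₁ : ℂ) * ((starRingEnd ℂ) (u t₀ x) * lapC (u t₀) x) by ring]
            exact Complex.im_ofReal_mul _ _
          rw [hPdef]
          rw [mul_add, mul_sub, Complex.add_im, Complex.sub_im, hWterm, add_zero, hsig]
        rw [hF'def]
        simp only [← hwdef, hmul, Complex.I_mul_re, him]
        ring
      -- integrate
      have hint1 : Integrable fun x => ((starRingEnd ℂ) (u t₀ x) * lapC (lapC (u t₀)) x) :=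
        integrable_conj_mul hfs (lapC_smooth (lapC_smooth hfs)) hfc
      have hint2 : Integrable fun x => ((starRingEnd ℂ) (u t₀ x) * lapC (u t₀) x) :=
        integrable_conj_mul hfs (lapC_smooth hfs) hfc
      calc ∫ x, F' t₀ x
          = ∫ x, (-2 * ((starRingEnd ℂ) (u t₀ x) * lapC (lapC (u t₀)) x).im
            + 2 * σ₁ * ((starRingEnd ℂ) (u t₀ x) * lapC (u t₀) x).im) :=
            integral_congr_ae (Filter.Eventually.of_forall fun x => hpt x)
        _ = -2 * (∫ x, ((starRingEnd ℂ) (u t₀ x) * lapC (lapC (u t₀)) x).im)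
            + 2 * σ₁ * (∫ x, ((starRingEnd ℂ) (u t₀ x) * lapC (u t₀) x).im) := by
            have hi1 : Integrable
                (fun x => -2 * ((starRingEnd ℂ) (u t₀ x) * lapC (lapC (u t₀)) x).im) :=
              (hint1.im).const_mul _
            have hi2 : Integrable
                (fun x => 2 * σ₁ * ((starRingEnd ℂ) (u t₀ x) * lapC (u t₀) x).im) :=
              (hint2.im).const_mul _
            rw [integral_add hi1 hi2, integral_const_mul, integral_const_mul]
        _ = -2 * (∫ x, (starRingEnd ℂ) (u t₀ x) * lapC (lapC (u t₀)) x).im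
            + 2 * σ₁ * (∫ x, (starRingEnd ℂ) (u t₀ x) * lapC (u t₀) x).im := by
            have hIm1 : ∫ x, ((starRingEnd ℂ) (u t₀ x) * lapC (lapC (u t₀)) x).im
                = (∫ x, (starRingEnd ℂ) (u t₀ x) * lapC (lapC (u t₀)) x).im :=
              integral_im hint1
            have hIm2 : ∫ x, ((starRingEnd ℂ) (u t₀ x) * lapC (u t₀) x).im
                = (∫ x, (starRingEnd ℂ) (u t₀ x) * lapC (u t₀) x).im :=
              integral_im hint2
            rw [hIm1, hIm2]
        _ = 0 := by
            rw [im_bilap hfs hfc, im_lap hfs hfc]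
            ring
    rwa [hzero] at hderiv
  -- conclude: derivative zero on the convex set `Ioo t₁ t₂` implies constancy
  intro s hs t ht
  have hmvt := Convex.norm_image_sub_le_of_norm_hasDerivWithin_le
    (f := fun r => ∫ x, Complex.normSq (u r x)) (f' := fun _ => 0) (C := 0)
    (fun r hr => (mass_deriv r hr).hasDerivWithinAt)
    (fun r _ => by simp) (convex_Ioo t₁ t₂) hs ht
  simp only [zero_mul, norm_le_zero_iff, sub_eq_zero] at hmvt
  exact hmvt.symm

end
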